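/- For the surfaces in Nil given as leaves of the foliation with unit normal η = (xY + Z)/√(1+x²) and tangent frame F₁ = X, F₂ = (Y - xZ)/√(1+x²), the squared norm of the second fundamental form is ||B||² = (x²-1)²/(2(1+x²)²) and the mean curvature is H = 0. -/

import Mathlib

/- STATEMENT 17: For the leaves of the foliation of `Nil` with unit normal
`η = (xY + Z)/√(1+x²)` and tangent frame `F₁ = X`, `F₂ = (Y - xZ)/√(1+x²)`,
one has `‖B‖² = (x²-1)²/(2(1+x²)²)` and `H = 0`.

All fields are written in coefficients with respect to the orthonormal
left-invariant frame `(X, Y, Z)` (indices `0,1,2`); all coefficients depend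
only on the first coordinate `x`.  The Christoffel symbols of the Levi-Civita
connection of `Nil` in this frame (from `∇_X Y = Z/2`, `∇_Y X = -Z/2`,
`∇_X Z = ∇_Z X = -Y/2`, `∇_Y Z = ∇_Z Y = X/2`, `∇_X X = ∇_Y Y = ∇_Z Z = 0`)
are encoded in `nilGamma`.  The covariant derivative of a field `w` along a
field `u` whose coordinate velocity in the `x`-direction is `ux` is
`nilCov u ux w`.  The coordinate `x`-velocity of `F₁ = ∂/∂x` is `1`, and that
of `F₂ = s·∂/∂y` is `0`. -/

/-- `s = 1/√(1+x²)`. -/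
noncomputable def nilS (x : ℝ) : ℝ := (Real.sqrt (1 + x ^ 2))⁻¹

/-- Christoffel bilinear form of `Nil` in the left-invariant frame. -/
noncomputable def nilGamma (u w : Fin 3 → ℝ) : Fin 3 → ℝ :=
  ![(u 1 * w 2 + u 2 * w 1) / 2,
    -(u 0 * w 2 + u 2 * w 0) / 2,
    (u 0 * w 1 - u 1 * w 0) / 2]

/-- `F₁ = X` in frame coefficients. -/
noncomputable def nilF1 (_ : ℝ) : Fin 3 → ℝ := ![1, 0, 0]

/-- `F₂ = (Y - xZ)/√(1+x²)` in frame coefficients. -/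
noncomputable def nilF2 (x : ℝ) : Fin 3 → ℝ := ![0, nilS x, -x * nilS x]

/-- `η = (xY + Z)/√(1+x²)` in frame coefficients. -/
noncomputable def nilEta (x : ℝ) : Fin 3 → ℝ := ![0, x * nilS x, nilS x]

/-- Covariant derivative (frame coefficients, fields depending only on `x`)
of `w` along `u`, whose coordinate `x`-velocity is `ux`. -/
noncomputable def nilCov (u : ℝ → Fin 3 → ℝ) (ux : ℝ) (w : ℝ → Fin 3 → ℝ)
    (x : ℝ) : Fin 3 → ℝ :=
  fun i => ux * deriv (fun t => w t i) x + nilGamma (u x) (w x) i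

/-- Second fundamental form coefficient `b_{ij} = ⟨∇_{F_i} F_j, η⟩`. -/
noncomputable def nilB : Fin 2 → Fin 2 → ℝ → ℝ
  | 0, 0 => fun x => ∑ k, nilCov nilF1 1 nilF1 x k * nilEta x k
  | 0, 1 => fun x => ∑ k, nilCov nilF1 1 nilF2 x k * nilEta x k
  | 1, 0 => fun x => ∑ k, nilCov nilF2 0 nilF1 x k * nilEta x k
  | 1, 1 => fun x => ∑ k, nilCov nilF2 0 nilF2 x k * nilEta x k

/- Both diagonal coefficients vanish: `∇_X X = 0`, and `∇_{F₂} F₂ = -x s² X` is tangent.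
With `s = 1/√(1+x²)` and `s' = -x s³`, both off-diagonal coefficients equal `(x²-1) s²/2`,
so `‖B‖² = 2 · ((x²-1)/(2(1+x²)))²`. -/

lemma nilS_sq (x : ℝ) : nilS x ^ 2 = (1 + x ^ 2)⁻¹ := by
  rw [nilS, inv_pow, Real.sq_sqrt (by positivity)]

lemma hasDerivAt_nilS (x : ℝ) : HasDerivAt nilS (-x * nilS x ^ 3) x := by
  have hpos : (0 : ℝ) < 1 + x ^ 2 := by positivity
  have hsqrt : HasDerivAt (fun t : ℝ => Real.sqrt (1 + t ^ 2)) (x / Real.sqrt (1 + x ^ 2)) x := by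
    convert ((hasDerivAt_pow 2 x).const_add 1).sqrt hpos.ne' using 1
    ring
  refine (hsqrt.inv (Real.sqrt_pos.2 hpos).ne').congr_deriv ?_
  rw [nilS]
  ring

lemma deriv_nilF2 (x : ℝ) (i : Fin 3) :
    deriv (fun t => nilF2 t i) x =
      ![0, -x * nilS x ^ 3, -nilS x + x ^ 2 * nilS x ^ 3] i := by
  fin_cases i
  · simp [nilF2]
  · simpa [nilF2] using (hasDerivAt_nilS x).deriv
  · have h : HasDerivAt (fun t => -t * nilS t) (-1 * nilS x + -x * (-x * nilS x ^ 3)) x :=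
      ((hasDerivAt_id x).neg).mul (hasDerivAt_nilS x)
    show deriv (fun t => -t * nilS t) x = -nilS x + x ^ 2 * nilS x ^ 3
    rw [h.deriv]
    ring

lemma nilB_zero_zero (x : ℝ) : nilB 0 0 x = 0 := by
  simp only [nilB, nilCov, nilF1, deriv_const, nilGamma, nilEta, Fin.sum_univ_three,
    Matrix.cons_val_zero, Matrix.cons_val_one, Matrix.cons_val_two, Matrix.head_cons,
    Matrix.tail_cons]
  ring

lemma nilB_one_one (x : ℝ) : nilB 1 1 x = 0 := by
  simp only [nilB, nilCov, nilGamma, nilF2, nilEta, Fin.sum_univ_three,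
    Matrix.cons_val_zero, Matrix.cons_val_one, Matrix.cons_val_two, Matrix.head_cons,
    Matrix.tail_cons]
  ring

lemma nilB_zero_one (x : ℝ) : nilB 0 1 x = (x ^ 2 - 1) * nilS x ^ 2 / 2 := by
  simp only [nilB, nilCov, deriv_nilF2]
  simp only [nilGamma, nilF1, nilF2, nilEta, Fin.sum_univ_three,
    Matrix.cons_val_zero, Matrix.cons_val_one, Matrix.cons_val_two, Matrix.head_cons,
    Matrix.tail_cons]
  ring

lemma nilB_one_zero (x : ℝ) : nilB 1 0 x = (x ^ 2 - 1) * nilS x ^ 2 / 2 := by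
  simp only [nilB, nilCov, nilGamma, nilF1, nilF2, nilEta, Fin.sum_univ_three,
    Matrix.cons_val_zero, Matrix.cons_val_one, Matrix.cons_val_two, Matrix.head_cons,
    Matrix.tail_cons]
  ring

/-- `H = 0` and `‖B‖² = (x²-1)²/(2(1+x²)²)`. -/
theorem nil_foliation_minimal_normB (x : ℝ) :
    (nilB 0 0 x + nilB 1 1 x) / 2 = 0 ∧
    ∑ i : Fin 2, ∑ j : Fin 2, (nilB i j x) ^ 2 =
      (x ^ 2 - 1) ^ 2 / (2 * (1 + x ^ 2) ^ 2) := by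
  refine ⟨by rw [nilB_zero_zero, nilB_one_one]; ring, ?_⟩
  simp only [Fin.sum_univ_two, nilB_zero_zero, nilB_one_one, nilB_zero_one, nilB_one_zero,
    nilS_sq]
  field_simp
  ring
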